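/- The Lobachevsky function is π-periodic: Λ(π) = 0 (equivalently ∫₀^π log(2 sin t) dt = 0), and for every real θ, Λ(θ + π) = Λ(θ). -/

import Mathlib

open Real MeasureTheory

/-- The Lobachevsky function `Λ(θ) = −∫₀^θ log |2 sin t| dt`. -/
noncomputable def lob (θ : ℝ) : ℝ := - ∫ t in (0:ℝ)..θ, Real.log |2 * Real.sin t|

/-! Off the zeros of `sin`, `log |2 sin t| = log 2 + log (sin t)`, so the classical value
`∫₀^π log (sin t) dt = -π log 2` gives `∫₀^π log |2 sin t| dt = 0`. The integrand is `π`-periodic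
and, as `log ‖·‖` of an analytic function, integrable on every interval, so its integral over
every period vanishes. -/

open intervalIntegral

lemma intervalIntegrable_log_abs_two_mul_sin (a b : ℝ) :
    IntervalIntegrable (fun t => log |2 * sin t|) volume a b :=
  ((analyticOnNhd_const.mul analyticOnNhd_sin).meromorphicOn (U := Set.uIcc a b)
    ).intervalIntegrable_log_norm

lemma periodic_log_abs_two_mul_sin : Function.Periodic (fun t => log |2 * sin t|) π := by
  intro t
  simp only [sin_add_pi, mul_neg, abs_neg]

lemma integral_log_abs_two_mul_sin_zero_pi : ∫ t in (0:ℝ)..π, log |2 * sin t| = 0 :=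
  calc ∫ t in (0:ℝ)..π, log |2 * sin t|
    _ = ∫ t in (0:ℝ)..π, (log 2 + log (sin t)) := by
      simp only [integral_of_le pi_pos.le, integral_Ioc_eq_integral_Ioo]
      refine setIntegral_congr_fun measurableSet_Ioo fun t ht => ?_
      have hsin : 0 < sin t := sin_pos_of_pos_of_lt_pi ht.1 ht.2
      rw [abs_of_pos (by positivity), log_mul two_ne_zero hsin.ne']
    _ = π * log 2 + ∫ t in (0:ℝ)..π, log (sin t) := by
      rw [integral_add (g := fun t => log (sin t)) intervalIntegrable_const
        intervalIntegrable_log_sin, intervalIntegral.integral_const, sub_zero, smul_eq_mul]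
    _ = 0 := by
      rw [integral_log_sin_zero_pi]
      ring

/-- The Lobachevsky function is `π`-periodic: `Λ(π) = 0` and
`Λ(θ + π) = Λ(θ)` for every real `θ`. -/
theorem lob_periodic : lob Real.pi = 0 ∧ ∀ θ : ℝ, lob (θ + Real.pi) = lob θ := by
  refine ⟨by rw [lob, integral_log_abs_two_mul_sin_zero_pi, neg_zero], fun θ => ?_⟩
  rw [lob, lob, periodic_log_abs_two_mul_sin.intervalIntegral_add_eq_add 0 θ
    intervalIntegrable_log_abs_two_mul_sin, zero_add, integral_log_abs_two_mul_sin_zero_pi,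
    add_zero]
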